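/- arXiv:1709.06710 — 6 statements merged into one kernel-verified Lean document; each statement's English description precedes it below -/
import Mathlib

section
/- Let H be a complex Hilbert space and let z be a bounded linear operator on H with ‖z‖ ≤ 1. Then there exists a linear isometry Ψ from B(H) into B(K), where K = H ⊕ H is the Hilbert space direct sum, such that Ψ(x)·Ψ(y) = Ψ(x z* y) for all x, y ∈ B(H) (in particular Ψ(x)² = Ψ(x z* x) for every x). Consequently, if X is a norm-closed subspace of B(H) with x z* x ∈ X for all x ∈ X, then the restriction of Ψ to X is an isometric Jordan homomorphism from X, equipped with the product (x, y) ↦ ½(x z* y + y z* x), onto the norm-closed subspace Ψ(X) of B(K), and Ψ(X) is closed under squares (that is, Ψ(X) is a Jordan operator algebra). -/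
/-!
With `d = (1 - z* z)^{1/2}`, the column `c h = (z h, d h)` is an isometry `H → H ⊕₂ H`, since
`‖z h‖² + ‖d h‖² = ⟪(z* z + d²) h, h⟫ = ‖h‖²`. Let `ι` be the inclusion of the first summand and
`Ψ x = ι x c*`. Postcomposition with the isometry `ι` preserves norms, and so does precomposition
with the coisometry `c*`, because `c* c = 1` lets `x = (x c*) c` be recovered. Moreover
`c* ι = (ι* c)* = z*`, so `Ψ x Ψ y = ι x (c* ι) y c* = Ψ (x z* y)`. The Jordan assertions then
follow formally, the image of a closed subspace under an isometry being complete.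
-/

open ContinuousLinearMap

noncomputable section

namespace LinearIsometry

variable {𝕜 E F G : Type*} [RCLike 𝕜]
  [NormedAddCommGroup E] [InnerProductSpace 𝕜 E] [CompleteSpace E]
  [NormedAddCommGroup G] [InnerProductSpace 𝕜 G] [CompleteSpace G]
  [NormedAddCommGroup F] [NormedSpace 𝕜 F]

def precompAdjoint (c : E →ₗᵢ[𝕜] G) : (E →L[𝕜] F) →ₗᵢ[𝕜] (G →L[𝕜] F) where
  toFun x := x ∘L adjoint c.toContinuousLinearMap
  map_add' _ _ := add_comp _ _ _
  map_smul' _ _ := smul_comp _ _ _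
  norm_map' x := by
    have hc : ‖c.toContinuousLinearMap‖ ≤ 1 := c.norm_toContinuousLinearMap_le
    have hc' : ‖adjoint c.toContinuousLinearMap‖ ≤ 1 := by rwa [LinearIsometryEquiv.norm_map]
    refine le_antisymm ((opNorm_comp_le _ _).trans (mul_le_of_le_one_right (norm_nonneg x) hc')) ?_
    calc ‖x‖ = ‖(x ∘L adjoint c.toContinuousLinearMap) ∘L c.toContinuousLinearMap‖ := by
          rw [ContinuousLinearMap.comp_assoc, c.adjoint_comp_self, ContinuousLinearMap.one_def,
            ContinuousLinearMap.comp_id]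
      _ ≤ ‖x ∘L adjoint c.toContinuousLinearMap‖ :=
          (opNorm_comp_le _ _).trans (mul_le_of_le_one_right (norm_nonneg _) hc)

variable {F' : Type*} [NormedAddCommGroup F'] [NormedSpace 𝕜 F']

def sandwich (ι : F →ₗᵢ[𝕜] F') (c : E →ₗᵢ[𝕜] G) : (E →L[𝕜] F) →ₗᵢ[𝕜] (G →L[𝕜] F') :=
  (postcomp ι).comp (precompAdjoint c)

lemma sandwich_mul_sandwich (ι c : E →ₗᵢ[𝕜] G) (x y : E →L[𝕜] E) :
    sandwich ι c x * sandwich ι c y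
      = sandwich ι c (x * (adjoint c.toContinuousLinearMap ∘L ι.toContinuousLinearMap) * y) :=
  rfl

end LinearIsometry

namespace WithLp

variable (p : ENNReal) [Fact (1 ≤ p)] (𝕜 : Type*) {E F : Type*} [RCLike 𝕜]
  [NormedAddCommGroup E] [NormedSpace 𝕜 E] [NormedAddCommGroup F] [NormedSpace 𝕜 F]

variable (E F) in
def linearIsometryInl : E →ₗᵢ[𝕜] WithLp p (E × F) where
  toLinearMap := (WithLp.linearEquiv p 𝕜 (E × F)).symm.toLinearMap ∘ₗ LinearMap.inl 𝕜 E F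
  norm_map' := norm_toLp_fst p E F

@[simp]
lemma linearIsometryInl_apply (x : E) : linearIsometryInl p 𝕜 E F x = toLp p (x, 0) :=
  rfl

end WithLp

variable {H : Type*} [NormedAddCommGroup H] [InnerProductSpace ℂ H] [CompleteSpace H]

def defect (z : H →L[ℂ] H) : H →L[ℂ] H := CFC.sqrt (1 - star z * z)

lemma norm_apply_sq_add_norm_defect_apply_sq {z : H →L[ℂ] H} (hz : ‖z‖ ≤ 1) (h : H) :
    ‖z h‖ ^ 2 + ‖defect z h‖ ^ 2 = ‖h‖ ^ 2 := by
  have hz' : 0 ≤ 1 - star z * z := sub_nonneg.mpr <|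
    (CStarAlgebra.norm_le_one_iff_of_nonneg _).mp <| by
      rw [CStarRing.norm_star_mul_self]; exact mul_le_one₀ hz (norm_nonneg z) hz
  have hd : adjoint (defect z) ∘L defect z = 1 - star z * z := by
    rw [← star_eq_adjoint, (CFC.sqrt_nonneg _).isSelfAdjoint.star_eq]
    exact CFC.sqrt_mul_sqrt_self _ hz'
  rw [apply_norm_sq_eq_inner_adjoint_left, apply_norm_sq_eq_inner_adjoint_left, hd,
    ← star_eq_adjoint, ← map_add, ← inner_add_left, ← add_apply, ← mul_def, add_sub_cancel,
    one_apply_eq_self, inner_self_eq_norm_sq]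

def column {z : H →L[ℂ] H} (hz : ‖z‖ ≤ 1) : H →ₗᵢ[ℂ] WithLp 2 (H × H) where
  toLinearMap := (WithLp.linearEquiv 2 ℂ (H × H)).symm.toLinearMap ∘ₗ
    (z.toLinearMap.prod (defect z).toLinearMap)
  norm_map' h := by
    rw [← sq_eq_sq₀ (norm_nonneg _) (norm_nonneg _), WithLp.prod_norm_sq_eq_of_L2]
    exact norm_apply_sq_add_norm_defect_apply_sq hz h

lemma column_apply {z : H →L[ℂ] H} (hz : ‖z‖ ≤ 1) (h : H) :
    column hz h = WithLp.toLp 2 (z h, defect z h) :=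
  rfl

lemma adjoint_column_comp_inl {z : H →L[ℂ] H} (hz : ‖z‖ ≤ 1) :
    adjoint (column hz).toContinuousLinearMap ∘L
      (WithLp.linearIsometryInl 2 ℂ H H).toContinuousLinearMap = adjoint z := by
  ext h
  refine ext_inner_right ℂ fun k => ?_
  simp [adjoint_inner_left, WithLp.prod_inner_apply, column_apply]

end

/-- Jordan variant of the Kaneda–Paulsen theorem, isometric forward
direction.  For a complex Hilbert space `H` and a contraction `z ∈ B(H)`, there is a
linear isometry `Ψ : B(H) → B(H ⊕₂ H)` with `Ψ x * Ψ y = Ψ (x z* y)`; consequently every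
norm-closed subspace `X ⊆ B(H)` with `x z* x ∈ X` for all `x ∈ X` is carried by `Ψ`
isometrically and Jordan-homomorphically (for the product `½(x z* y + y z* x)`) onto the
norm-closed subspace `Ψ '' X`, which is closed under squares, i.e. a Jordan operator
algebra. -/
theorem stmt_0 (H : Type*) [NormedAddCommGroup H] [InnerProductSpace ℂ H] [CompleteSpace H]
    (z : H →L[ℂ] H) (hz : ‖z‖ ≤ 1) :
    ∃ Ψ : (H →L[ℂ] H) →ₗᵢ[ℂ] (WithLp 2 (H × H) →L[ℂ] WithLp 2 (H × H)),
      (∀ x y : H →L[ℂ] H,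
          Ψ x * Ψ y = Ψ (x * ContinuousLinearMap.adjoint z * y)) ∧
      ∀ X : Submodule ℂ (H →L[ℂ] H), IsClosed (X : Set (H →L[ℂ] H)) →
        (∀ x ∈ X, x * ContinuousLinearMap.adjoint z * x ∈ X) →
        IsClosed ((⇑Ψ) '' (X : Set (H →L[ℂ] H))) ∧
        (∀ w ∈ (⇑Ψ) '' (X : Set (H →L[ℂ] H)), w * w ∈ (⇑Ψ) '' (X : Set (H →L[ℂ] H))) ∧
        (∀ x ∈ X, ∀ y ∈ X,
          Ψ ((2 : ℂ)⁻¹ • (x * ContinuousLinearMap.adjoint z * y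
              + y * ContinuousLinearMap.adjoint z * x))
            = (2 : ℂ)⁻¹ • (Ψ x * Ψ y + Ψ y * Ψ x)) := by
  set Ψ := LinearIsometry.sandwich (WithLp.linearIsometryInl 2 ℂ H H) (column hz)
  have hmul (x y : H →L[ℂ] H) : Ψ x * Ψ y = Ψ (x * adjoint z * y) := by
    rw [LinearIsometry.sandwich_mul_sandwich, adjoint_column_comp_inl]
  refine ⟨Ψ, hmul, fun X hXc hXsq => ⟨?_, ?_, fun x _ y _ => ?_⟩⟩
  · exact ((isComplete_image_iff Ψ.isometry.isUniformInducing).mpr hXc.isComplete).isClosed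
  · rintro _ ⟨x, hx, rfl⟩
    exact ⟨x * adjoint z * x, hXsq x hx, (hmul x x).symm⟩
  · rw [map_smul, map_add, hmul, hmul]
end

section
/- Let B be a unital C*-algebra, let ε ≥ 0, and let a, b, c ∈ B with ‖b‖ ≤ 1 and 0 ≤ c ≤ a ≤ 1 (in the canonical order on selfadjoint elements). If ‖a b‖ ≤ ε then ‖c b‖ ≤ √ε. Similarly, if ‖b a‖ ≤ ε then ‖b c‖ ≤ √ε. -/
/-!
Since `0 ≤ c ≤ 1`, functional calculus gives `c ^ 2 ≤ c ≤ a`, and conjugation preserves the order,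
so the C*-identity yields `‖c b‖ ^ 2 = ‖b⋆ c ^ 2 b‖ ≤ ‖b⋆ a b‖ ≤ ‖b⋆‖ ‖a b‖ ≤ ε`.
The right-handed statement is the left-handed one applied to `b⋆`.
-/

namespace CStarAlgebra

lemma sq_le_self_of_nonneg_of_le_one {A : Type*} [CStarAlgebra A] [PartialOrder A]
    [StarOrderedRing A] {c : A} (hc₀ : 0 ≤ c) (hc₁ : c ≤ 1) : c ^ 2 ≤ c := by
  simpa using pow_antitone hc₀ hc₁ one_le_two

lemma norm_star_conjugate_le_of_nonneg_of_le {A : Type*} [NonUnitalCStarAlgebra A]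
    [PartialOrder A] [StarOrderedRing A] {x y : A} (hx : 0 ≤ x) (hxy : x ≤ y) (b : A) :
    ‖star b * x * b‖ ≤ ‖star b * y * b‖ :=
  norm_le_norm_of_nonneg_of_le (star_left_conjugate_nonneg hx b)
    (star_left_conjugate_le_conjugate hxy b)

end CStarAlgebra

lemma IsSelfAdjoint.norm_mul_sq {A : Type*} [NormedRing A] [StarRing A] [CStarRing A]
    {c : A} (hc : IsSelfAdjoint c) (b : A) : ‖c * b‖ ^ 2 = ‖star b * c ^ 2 * b‖ := by
  rw [sq, ← CStarRing.norm_star_mul_self, star_mul, hc.star_eq, sq]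
  simp only [mul_assoc]

open CStarAlgebra in
theorem norm_mul_le_sqrt_of_le_of_norm_mul_le {A : Type*} [CStarAlgebra A] [PartialOrder A]
    [StarOrderedRing A] {a b c : A} {ε : ℝ} (hb : ‖b‖ ≤ 1) (hc₀ : 0 ≤ c) (hca : c ≤ a)
    (ha₁ : a ≤ 1) (hab : ‖a * b‖ ≤ ε) : ‖c * b‖ ≤ √ε := by
  have hc_sq : c ^ 2 ≤ a := (sq_le_self_of_nonneg_of_le_one hc₀ (hca.trans ha₁)).trans hca
  refine Real.le_sqrt_of_sq_le ?_
  calc ‖c * b‖ ^ 2 = ‖star b * c ^ 2 * b‖ := (IsSelfAdjoint.of_nonneg hc₀).norm_mul_sq b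
    _ ≤ ‖star b * a * b‖ :=
      norm_star_conjugate_le_of_nonneg_of_le (pow_nonneg hc₀ 2) hc_sq b
    _ ≤ ‖star b‖ * ‖a * b‖ := by rw [mul_assoc]; exact norm_mul_le _ _
    _ ≤ 1 * ε := by gcongr; rwa [norm_star]
    _ = ε := one_mul ε

theorem stmt_1_general {B : Type*} [CStarAlgebra B] [PartialOrder B] [StarOrderedRing B]
    (ε : ℝ) (a b c : B) (hb : ‖b‖ ≤ 1)
    (hc0 : 0 ≤ c) (hca : c ≤ a) (ha1 : a ≤ 1) :
    (‖a * b‖ ≤ ε → ‖c * b‖ ≤ Real.sqrt ε) ∧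
    (‖b * a‖ ≤ ε → ‖b * c‖ ≤ Real.sqrt ε) := by
  refine ⟨norm_mul_le_sqrt_of_le_of_norm_mul_le hb hc0 hca ha1, fun hba => ?_⟩
  have hstar {x : B} (hx : 0 ≤ x) : ‖b * x‖ = ‖x * star b‖ := by
    rw [← norm_star, star_mul, (IsSelfAdjoint.of_nonneg hx).star_eq]
  rw [hstar hc0]
  rw [hstar (hc0.trans hca)] at hba
  exact norm_mul_le_sqrt_of_le_of_norm_mul_le (by rwa [norm_star]) hc0 hca ha1 hba

/-- Lemma 5.1 of the paper.  In a unital C*-algebra, if `‖b‖ ≤ 1`,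
`0 ≤ c ≤ a ≤ 1`, and `‖a b‖ ≤ ε`, then `‖c b‖ ≤ √ε`; similarly with products on the
other side. -/
theorem stmt_1 {B : Type*} [CStarAlgebra B] [PartialOrder B] [StarOrderedRing B]
    (ε : ℝ) (hε : 0 ≤ ε) (a b c : B) (hb : ‖b‖ ≤ 1)
    (hc0 : 0 ≤ c) (hca : c ≤ a) (ha1 : a ≤ 1) :
    (‖a * b‖ ≤ ε → ‖c * b‖ ≤ Real.sqrt ε) ∧
    (‖b * a‖ ≤ ε → ‖b * c‖ ≤ Real.sqrt ε) :=
  stmt_1_general ε a b c hb hc0 hca ha1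
end

section
/- Let B be a C*-algebra, let D be a hereditary subalgebra of B, and let (f_t)_{t∈Λ} be a net in D, indexed by a directed set Λ, such that 0 ≤ f_t and ‖f_t‖ ≤ 1 for every t, f_s ≤ f_t whenever s ≤ t, and for every d ∈ D the net d* f_t d converges to d* d in the weak topology σ(B, B*) (that is, φ(d* f_t d) → φ(d* d) for every bounded linear functional φ on B). Then (f_t) is a contractive approximate identity for D: ‖f_t d − d‖ → 0 and ‖d f_t − d‖ → 0 in norm for every d ∈ D. -/
open scoped Pointwise
open Filter Topology

/-- `D` is a hereditary subalgebra of the C*-algebra `B`: a norm-closed *-subalgebra such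
that `0 ≤ b ≤ d` with `d ∈ D` implies `b ∈ D`. -/
def IsHereditarySubalgebra {B : Type*} [NonUnitalCStarAlgebra B] [PartialOrder B]
    [StarOrderedRing B] (D : NonUnitalStarSubalgebra ℂ B) : Prop :=
  IsClosed (D : Set B) ∧ ∀ b d : B, d ∈ D → 0 ≤ b → b ≤ d → b ∈ D

/-- The left ideal associated with a hereditary subalgebra `D` of `B`: the norm closure of
the linear span of products `b * d` with `b ∈ B`, `d ∈ D`. -/
def leftIdealOf {B : Type*} [NonUnitalCStarAlgebra B]
    (D : NonUnitalStarSubalgebra ℂ B) : Set B :=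
  closure ((Submodule.span ℂ {x : B | ∃ b : B, ∃ d ∈ D, x = b * d} : Submodule ℂ B) : Set B)

/-!
Put `g t = d* d - d* f_t d`. Since `f_t` is a positive contraction, `f_t² ≤ f_t`, which gives
`‖f_t d - d‖² ≤ ‖g t‖`; so it suffices that the decreasing net of positive elements `g t`, which
tends to `0` weakly, tends to `0` in norm. By Hahn–Banach (Mazur), `0` is a norm limit of convex
combinations of the `g t`, and every such combination dominates some `g s`, hence all `g t` with
`t ≥ s`; norm monotonicity on positive elements finishes the argument.
-/

theorem mem_closure_convexHull_range_of_forall_tendsto {𝕜 E ι : Type*} [RCLike 𝕜]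
    [TopologicalSpace E] [AddCommGroup E] [Module ℝ E] [Module 𝕜 E] [IsScalarTower ℝ 𝕜 E]
    [IsTopologicalAddGroup E] [ContinuousSMul 𝕜 E] [LocallyConvexSpace ℝ E]
    {l : Filter ι} [l.NeBot] {x : ι → E} {a : E}
    (h : ∀ φ : StrongDual 𝕜 E, Tendsto (fun i => φ (x i)) l (𝓝 (φ a))) :
    a ∈ closure (convexHull ℝ (Set.range x)) := by
  have : ContinuousSMul ℝ E := IsScalarTower.continuousSMul 𝕜
  by_contra ha
  obtain ⟨φ, u, hφ, hu⟩ := RCLike.geometric_hahn_banach_closed_point (𝕜 := 𝕜)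
    (convex_convexHull ℝ _).closure isClosed_closure ha
  obtain ⟨i, hi⟩ := (((RCLike.continuous_re.tendsto _).comp (h φ)).eventually
    (lt_mem_nhds hu)).exists
  exact (hφ _ (subset_closure (subset_convexHull ℝ _ ⟨i, rfl⟩))).not_gt hi

theorem Antitone.exists_le_of_mem_convexHull_range {Λ E : Type*} [Preorder Λ]
    [IsDirected Λ (· ≤ ·)] [AddCommGroup E] [PartialOrder E] [IsOrderedAddMonoid E]
    [Module ℝ E] [PosSMulMono ℝ E] {g : Λ → E} (hg : Antitone g) {x : E}
    (hx : x ∈ convexHull ℝ (Set.range g)) : ∃ t, g t ≤ x := by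
  refine convexHull_min (t := {x | ∃ t, g t ≤ x}) ?_ ?_ hx
  · rintro _ ⟨t, rfl⟩
    exact ⟨t, le_rfl⟩
  · rintro y ⟨r, hr⟩ z ⟨s, hs⟩ a b ha hb hab
    obtain ⟨t, hrt, hst⟩ := directed_of (· ≤ ·) r s
    refine ⟨t, ?_⟩
    calc g t = a • g t + b • g t := by rw [← add_smul, hab, one_smul]
      _ ≤ a • y + b • z := by
        gcongr
        exacts [(hg hrt).trans hr, (hg hst).trans hs]

namespace CStarAlgebra

variable {A : Type*} [NonUnitalCStarAlgebra A] [PartialOrder A] [StarOrderedRing A]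

theorem tendsto_zero_of_antitone_of_forall_dual_tendsto_zero {Λ : Type*} [Preorder Λ]
    [IsDirected Λ (· ≤ ·)] [Nonempty Λ] {g : Λ → A} (hg0 : ∀ t, 0 ≤ g t) (hg : Antitone g)
    (hweak : ∀ φ : A →L[ℂ] ℂ, Tendsto (fun t => φ (g t)) atTop (𝓝 0)) :
    Tendsto g atTop (𝓝 0) := by
  have h0 : (0 : A) ∈ closure (convexHull ℝ (Set.range g)) :=
    mem_closure_convexHull_range_of_forall_tendsto (𝕜 := ℂ) fun φ => by simpa using hweak φ
  rw [Metric.tendsto_nhds]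
  intro ε hε
  obtain ⟨x, hx, hxε⟩ := Metric.mem_closure_iff.1 h0 ε hε
  obtain ⟨s, hs⟩ := hg.exists_le_of_mem_convexHull_range hx
  filter_upwards [eventually_ge_atTop s] with t hst
  rw [dist_zero_right]
  calc ‖g t‖ ≤ ‖g s‖ := norm_le_norm_of_nonneg_of_le (hg0 t) (hg hst)
    _ ≤ ‖x‖ := norm_le_norm_of_nonneg_of_le (hg0 s) hs
    _ < ε := by rwa [dist_zero_left] at hxε

theorem mul_self_le_of_nonneg_of_norm_le_one {a : A} (ha : 0 ≤ a) (ha1 : ‖a‖ ≤ 1) :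
    a * a ≤ a := by
  set s := CFC.sqrt a
  have hs : IsSelfAdjoint s := .of_nonneg (CFC.sqrt_nonneg a)
  have hss : s * s = a := CFC.sqrt_mul_sqrt_self a ha
  calc a * a = star s * a * s := by rw [hs.star_eq, ← hss]; noncomm_ring
    _ ≤ ‖a‖ • (star s * s) := star_left_conjugate_le_norm_smul (.of_nonneg ha)
    _ = ‖a‖ • a := by rw [hs.star_eq, hss]
    _ ≤ (1 : ℝ) • a := by gcongr
    _ = a := one_smul ℝ a

theorem star_left_conjugate_le_of_norm_le_one {a : A} (ha : IsSelfAdjoint a) (ha1 : ‖a‖ ≤ 1)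
    (d : A) : star d * a * d ≤ star d * d :=
  calc star d * a * d ≤ ‖a‖ • (star d * d) := star_left_conjugate_le_norm_smul ha
    _ ≤ (1 : ℝ) • (star d * d) := by gcongr; exact star_mul_self_nonneg d
    _ = star d * d := one_smul ℝ _

theorem norm_mul_sub_sq_le {a : A} (ha : 0 ≤ a) (ha1 : ‖a‖ ≤ 1) (d : A) :
    ‖a * d - d‖ ^ 2 ≤ ‖star d * d - star d * a * d‖ := by
  have hsa : IsSelfAdjoint a := .of_nonneg ha
  have hle : star (a * d - d) * (a * d - d) ≤ star d * d - star d * a * d := by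
    have : star d * d - star d * a * d - star (a * d - d) * (a * d - d)
        = star d * (a - a * a) * d := by
      simp only [star_sub, star_mul, hsa.star_eq]
      noncomm_ring
    rw [← sub_nonneg, this]
    exact star_left_conjugate_nonneg (sub_nonneg.2 (mul_self_le_of_nonneg_of_norm_le_one ha ha1)) d
  calc ‖a * d - d‖ ^ 2 = ‖star (a * d - d) * (a * d - d)‖ := by
        rw [CStarRing.norm_star_mul_self, sq]
    _ ≤ _ := norm_le_norm_of_nonneg_of_le (star_mul_self_nonneg _) hle

end CStarAlgebra

theorem stmt_6_general {B : Type*} [NonUnitalCStarAlgebra B] [PartialOrder B] [StarOrderedRing B]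
    (D : NonUnitalStarSubalgebra ℂ B)
    {Λ : Type*} [Preorder Λ] [IsDirected Λ (· ≤ ·)] [Nonempty Λ]
    (f : Λ → B) (hf0 : ∀ t, 0 ≤ f t) (hf1 : ∀ t, ‖f t‖ ≤ 1)
    (hmono : ∀ s t : Λ, s ≤ t → f s ≤ f t)
    (hweak : ∀ d ∈ D, ∀ φ : B →L[ℂ] ℂ,
      Tendsto (fun t => φ (star d * f t * d)) atTop (𝓝 (φ (star d * d)))) :
    (∀ d ∈ D, Tendsto (fun t => ‖f t * d - d‖) atTop (𝓝 0)) ∧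
    (∀ d ∈ D, Tendsto (fun t => ‖d * f t - d‖) atTop (𝓝 0)) := by
  have left_mul : ∀ d ∈ D, Tendsto (fun t => ‖f t * d - d‖) atTop (𝓝 0) := by
    intro d hd
    set g : Λ → B := fun t => star d * d - star d * f t * d
    have hg0 : ∀ t, 0 ≤ g t := fun t => sub_nonneg.2 <|
      CStarAlgebra.star_left_conjugate_le_of_norm_le_one (.of_nonneg (hf0 t)) (hf1 t) d
    have hg : Antitone g := fun s t hst =>
      sub_le_sub_left (star_left_conjugate_le_conjugate (hmono s t hst) d) _
    have hgweak : ∀ φ : B →L[ℂ] ℂ, Tendsto (fun t => φ (g t)) atTop (𝓝 0) := fun φ => by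
      simpa [g] using (tendsto_const_nhds (x := φ (star d * d))).sub (hweak d hd φ)
    have hg_norm : Tendsto (fun t => Real.sqrt ‖g t‖) atTop (𝓝 0) := by
      simpa using ((CStarAlgebra.tendsto_zero_of_antitone_of_forall_dual_tendsto_zero
        hg0 hg hgweak).norm).sqrt
    refine squeeze_zero (fun t => norm_nonneg _) (fun t => ?_) hg_norm
    exact Real.le_sqrt_of_sq_le (CStarAlgebra.norm_mul_sub_sq_le (hf0 t) (hf1 t) d)
  refine ⟨left_mul, fun d hd => (left_mul (star d) (star_mem hd)).congr fun t => ?_⟩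
  rw [← norm_star (d * f t - d), star_sub, star_mul, (hf0 t).star_eq]

/-- Lemma 5.2(1) of the paper.  Let `D` be a hereditary subalgebra of a
C*-algebra `B` and `(f_t)` an increasing net of positive contractions in `D` such that
`d* f_t d → d* d` weakly for every `d ∈ D`.  Then `(f_t)` is a contractive approximate
identity for `D`. -/
theorem stmt_6 {B : Type*} [NonUnitalCStarAlgebra B] [PartialOrder B] [StarOrderedRing B]
    (D : NonUnitalStarSubalgebra ℂ B) (hD : IsHereditarySubalgebra D)
    {Λ : Type*} [Preorder Λ] [IsDirected Λ (· ≤ ·)] [Nonempty Λ]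
    (f : Λ → B) (hfD : ∀ t, f t ∈ D) (hf0 : ∀ t, 0 ≤ f t) (hf1 : ∀ t, ‖f t‖ ≤ 1)
    (hmono : ∀ s t : Λ, s ≤ t → f s ≤ f t)
    (hweak : ∀ d ∈ D, ∀ φ : B →L[ℂ] ℂ,
      Tendsto (fun t => φ (star d * f t * d)) atTop (𝓝 (φ (star d * d)))) :
    (∀ d ∈ D, Tendsto (fun t => ‖f t * d - d‖) atTop (𝓝 0)) ∧
    (∀ d ∈ D, Tendsto (fun t => ‖d * f t - d‖) atTop (𝓝 0)) :=
  stmt_6_general D f hf0 hf1 hmono hweak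
end

section
/- Let B be a C*-algebra and let D be a hereditary subalgebra of B. Let (e_t)_{t∈Λ} be a net in B, indexed by a directed set Λ, such that for every t one has e_t* e_t ≤ Re(e_t) := (e_t + e_t*)/2, the real parts satisfy Re(e_t) ∈ D and Re(e_s) ≤ Re(e_t) whenever s ≤ t, and for every d ∈ D the net d* Re(e_t) d converges to d* d in the weak topology σ(B, B*). Then (e_t) acts as a contractive approximate identity for D: ‖e_t‖ ≤ 1 for all t, and ‖e_t d − d‖ → 0 and ‖d e_t − d‖ → 0 in norm for every d ∈ D. -/
open scoped Pointwise
open Filter Topology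

/-!
The real parts `ℜ e_t` are self-adjoint contractions, so `a_t := d* d - d* (ℜ e_t) d` is a
decreasing net of positive elements tending weakly to `0`. By Hahn–Banach (weak and norm closures
of convex sets agree), `0` is a norm limit of convex combinations of the `a_t`, and every such
combination eventually dominates the decreasing net; hence `‖a_t‖ → 0`. Finally
`e* e ≤ ℜ e` gives `|e d - d|² ≤ d* d - d* (ℜ e) d`, while `‖e‖ ≤ 1` gives
`|e* d* - d*|² ≤ 2 (d d* - d (ℜ e) d*)`.
-/

open Filter Topology ComplexStarModule

lemma inv_two_smul_add_star_eq_realPart {A : Type*} [AddCommGroup A] [Module ℂ A]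
    [StarAddMonoid A] [StarModule ℂ A] (x : A) : (2 : ℂ)⁻¹ • (x + star x) = ℜ x := by
  rw [realPart_apply_coe, ← Complex.coe_smul]
  norm_num

lemma realPart_star {A : Type*} [AddCommGroup A] [Module ℂ A] [StarAddMonoid A]
    [StarModule ℂ A] (x : A) : ℜ (star x) = ℜ x := by
  ext
  simp only [realPart_apply_coe, star_star, add_comm]

lemma zero_mem_closure_convexHull_range_of_weakly_tendsto_zero {E ι : Type*}
    [NormedAddCommGroup E] [NormedSpace ℂ E] {l : Filter ι} [l.NeBot] {a : ι → E}
    (ha : ∀ φ : E →L[ℂ] ℂ, Tendsto (fun t => φ (a t)) l (𝓝 0)) :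
    (0 : E) ∈ closure (convexHull ℝ (Set.range a)) := by
  have ha_weak : Tendsto (fun t => toWeakSpace ℂ E (a t)) l (𝓝 0) := by
    refine (IsInducing.induced (X := WeakSpace ℂ E)
      fun x (φ : E →L[ℂ] ℂ) => φ x).tendsto_nhds_iff.mpr (tendsto_pi_nhds.mpr fun φ => ?_)
    show Tendsto (fun t => φ (a t)) l (𝓝 (φ 0))
    rw [map_zero]
    exact ha φ
  have h0 : toWeakSpace ℂ E 0 ∈ closure (toWeakSpace ℂ E '' convexHull ℝ (Set.range a)) := by
    rw [map_zero]
    exact mem_closure_of_tendsto ha_weak (Eventually.of_forall fun t =>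
      Set.mem_image_of_mem _ (subset_convexHull ℝ _ ⟨t, rfl⟩))
  rw [← (convex_convexHull ℝ _).toWeakSpace_closure ℂ] at h0
  simpa using h0

lemma Antitone.eventually_le_of_mem_convexHull {E Λ : Type*} [AddCommGroup E] [PartialOrder E]
    [IsOrderedAddMonoid E] [Module ℝ E] [PosSMulMono ℝ E] [Preorder Λ] {a : Λ → E}
    (ha : Antitone a) {c : E} (hc : c ∈ convexHull ℝ (Set.range a)) :
    ∀ᶠ t in atTop, a t ≤ c := by
  refine convexHull_min (t := {c | ∀ᶠ t in atTop, a t ≤ c}) ?_ ?_ hc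
  · rintro _ ⟨s, rfl⟩
    filter_upwards [eventually_ge_atTop s] with t hst using ha hst
  · intro x hx y hy μ ν hμ hν hμν
    filter_upwards [hx, hy] with t hxt hyt
    calc a t = μ • a t + ν • a t := by rw [← add_smul, hμν, one_smul]
      _ ≤ μ • x + ν • y := add_le_add (smul_le_smul_of_nonneg_left hxt hμ)
          (smul_le_smul_of_nonneg_left hyt hν)

lemma tendsto_zero_of_sq_le {ι : Type*} {l : Filter ι} {f g : ι → ℝ}
    (hg : Tendsto g l (𝓝 0)) (hf : ∀ t, 0 ≤ f t) (hfg : ∀ t, f t ^ 2 ≤ g t) :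
    Tendsto f l (𝓝 0) := by
  refine squeeze_zero hf (fun t => Real.le_sqrt_of_sq_le (hfg t)) ?_
  simpa [Function.comp_def] using (Real.continuous_sqrt.tendsto 0).comp hg

lemma star_mul_sub_self_mul_mul_sub_self {B : Type*} [NonUnitalRing B] [StarRing B]
    [Module ℂ B] [StarModule ℂ B] [IsScalarTower ℂ B B] [SMulCommClass ℂ B B] (u v : B) :
    star (u * v - v) * (u * v - v) =
      star v * (star u * u) * v - (2 : ℝ) • (star v * ℜ u * v) + star v * v := by
  have h : (2 : ℝ) • (star v * ℜ u * v) = star v * (u + star u) * v := by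
    rw [realPart_apply_coe, mul_smul_comm, smul_mul_assoc, smul_smul]
    norm_num
  rw [h]
  simp only [star_sub, star_mul, sub_mul, mul_sub, add_mul, mul_add, mul_assoc]
  abel

section CStarAlgebra

variable {B : Type*} [NonUnitalCStarAlgebra B] [PartialOrder B] [StarOrderedRing B]

lemma tendsto_norm_zero_of_antitone_of_weakly_tendsto_zero {Λ : Type*} [Preorder Λ]
    [IsDirected Λ (· ≤ ·)] [Nonempty Λ] {a : Λ → B} (ha_nonneg : ∀ t, 0 ≤ a t)
    (ha : Antitone a) (ha_weak : ∀ φ : B →L[ℂ] ℂ, Tendsto (fun t => φ (a t)) atTop (𝓝 0)) :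
    Tendsto (fun t => ‖a t‖) atTop (𝓝 0) := by
  rw [Metric.tendsto_nhds]
  intro ε hε
  obtain ⟨c, hc, hcε⟩ := Metric.mem_closure_iff.mp
    (zero_mem_closure_convexHull_range_of_weakly_tendsto_zero ha_weak) ε hε
  filter_upwards [ha.eventually_le_of_mem_convexHull hc] with t hle
  rw [Real.dist_0_eq_abs, abs_norm]
  calc ‖a t‖ ≤ ‖c‖ := CStarAlgebra.norm_le_norm_of_nonneg_of_le (ha_nonneg t) hle
    _ < ε := by rwa [dist_zero_left] at hcε

lemma star_left_conjugate_le_star_mul_self {a : B} (ha : IsSelfAdjoint a) (ha_norm : ‖a‖ ≤ 1)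
    (d : B) : star d * a * d ≤ star d * d :=
  (CStarAlgebra.star_left_conjugate_le_norm_smul ha).trans
    (smul_le_of_le_one_left (star_mul_self_nonneg d) ha_norm)

lemma norm_le_one_of_star_mul_self_le_realPart {x : B} (hx : star x * x ≤ ℜ x) : ‖x‖ ≤ 1 := by
  have h : ‖x‖ * ‖x‖ ≤ ‖x‖ :=
    calc ‖x‖ * ‖x‖ = ‖star x * x‖ := CStarRing.norm_star_mul_self.symm
      _ ≤ ‖(ℜ x : B)‖ := CStarAlgebra.norm_le_norm_of_nonneg_of_le (star_mul_self_nonneg x) hx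
      _ ≤ ‖x‖ := realPart.norm_le x
  nlinarith [norm_nonneg x]

lemma star_mul_sub_self_mul_mul_sub_self_le_of_star_mul_self_le_realPart {u : B}
    (hu : star u * u ≤ ℜ u) (v : B) :
    star (u * v - v) * (u * v - v) ≤ star v * v - star v * ℜ u * v := by
  rw [star_mul_sub_self_mul_mul_sub_self]
  calc star v * (star u * u) * v - (2 : ℝ) • (star v * ℜ u * v) + star v * v
      ≤ star v * ℜ u * v - (2 : ℝ) • (star v * ℜ u * v) + star v * v := by
        gcongr
        exact star_left_conjugate_le_conjugate hu v
    _ = star v * v - star v * ℜ u * v := by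
        rw [two_smul]
        abel

lemma star_mul_sub_self_mul_mul_sub_self_le_of_norm_le_one {u : B} (hu : ‖u‖ ≤ 1) (v : B) :
    star (u * v - v) * (u * v - v) ≤ (2 : ℝ) • (star v * v - star v * ℜ u * v) := by
  have hu' : ‖star u * u‖ ≤ 1 := by
    rw [CStarRing.norm_star_mul_self]
    nlinarith [norm_nonneg u]
  rw [star_mul_sub_self_mul_mul_sub_self]
  calc star v * (star u * u) * v - (2 : ℝ) • (star v * ℜ u * v) + star v * v
      ≤ star v * v - (2 : ℝ) • (star v * ℜ u * v) + star v * v := by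
        gcongr
        exact star_left_conjugate_le_star_mul_self (.star_mul_self u) hu' v
    _ = (2 : ℝ) • (star v * v - star v * ℜ u * v) := by
        rw [two_smul, two_smul]
        abel

lemma tendsto_norm_star_mul_self_sub_conjugate {Λ : Type*} [Preorder Λ]
    [IsDirected Λ (· ≤ ·)] [Nonempty Λ] {r : Λ → B} (hr_sa : ∀ t, IsSelfAdjoint (r t))
    (hr_norm : ∀ t, ‖r t‖ ≤ 1) (hr : Monotone r) {d : B}
    (hd : ∀ φ : B →L[ℂ] ℂ,
      Tendsto (fun t => φ (star d * r t * d)) atTop (𝓝 (φ (star d * d)))) :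
    Tendsto (fun t => ‖star d * d - star d * r t * d‖) atTop (𝓝 0) := by
  refine tendsto_norm_zero_of_antitone_of_weakly_tendsto_zero
    (fun t => sub_nonneg.mpr (star_left_conjugate_le_star_mul_self (hr_sa t) (hr_norm t) d))
    (fun s t hst => sub_le_sub_left (star_left_conjugate_le_conjugate (hr hst) d) _)
    (fun φ => ?_)
  simpa using (tendsto_const_nhds (x := φ (star d * d))).sub (hd φ)

end CStarAlgebra

theorem stmt_7_general {B : Type*} [NonUnitalCStarAlgebra B] [PartialOrder B] [StarOrderedRing B]
    (D : NonUnitalStarSubalgebra ℂ B)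
    {Λ : Type*} [Preorder Λ] [IsDirected Λ (· ≤ ·)] [Nonempty Λ]
    (e : Λ → B)
    (hF : ∀ t, star (e t) * e t ≤ (2 : ℂ)⁻¹ • (e t + star (e t)))
    (hmono : ∀ s t : Λ, s ≤ t →
      (2 : ℂ)⁻¹ • (e s + star (e s)) ≤ (2 : ℂ)⁻¹ • (e t + star (e t)))
    (hweak : ∀ d ∈ D, ∀ φ : B →L[ℂ] ℂ,
      Tendsto (fun t => φ (star d * ((2 : ℂ)⁻¹ • (e t + star (e t))) * d)) atTop
        (𝓝 (φ (star d * d)))) :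
    (∀ t, ‖e t‖ ≤ 1) ∧
    (∀ d ∈ D, Tendsto (fun t => ‖e t * d - d‖) atTop (𝓝 0)) ∧
    (∀ d ∈ D, Tendsto (fun t => ‖d * e t - d‖) atTop (𝓝 0)) := by
  simp only [inv_two_smul_add_star_eq_realPart] at hF hmono hweak
  have he_norm t : ‖e t‖ ≤ 1 := norm_le_one_of_star_mul_self_le_realPart (hF t)
  have h_defect : ∀ d ∈ D,
      Tendsto (fun t => ‖star d * d - star d * ℜ (e t) * d‖) atTop (𝓝 0) := fun d hd =>
    tendsto_norm_star_mul_self_sub_conjugate (fun t => (ℜ (e t)).2)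
      (fun t => (realPart.norm_le _).trans (he_norm t)) hmono (hweak d hd)
  refine ⟨he_norm, fun d hd => ?_, fun d hd => ?_⟩
  · refine tendsto_zero_of_sq_le (h_defect d hd) (fun t => norm_nonneg _) fun t => ?_
    rw [sq, ← CStarRing.norm_star_mul_self]
    exact CStarAlgebra.norm_le_norm_of_nonneg_of_le (star_mul_self_nonneg _)
      (star_mul_sub_self_mul_mul_sub_self_le_of_star_mul_self_le_realPart (hF t) d)
  · have h_defect_star := (h_defect (star d) (star_mem hd)).const_mul 2
    rw [mul_zero] at h_defect_star
    refine tendsto_zero_of_sq_le h_defect_star (fun t => norm_nonneg _) fun t => ?_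
    rw [← norm_star, star_sub, star_mul, sq, ← CStarRing.norm_star_mul_self, ← realPart_star,
      ← Real.norm_two, ← norm_smul]
    simpa only [star_star] using CStarAlgebra.norm_le_norm_of_nonneg_of_le
      (star_mul_self_nonneg _) (star_mul_sub_self_mul_mul_sub_self_le_of_norm_le_one
        ((norm_star _).trans_le (he_norm t)) (star d))

/-- Lemma 5.2(2) of the paper.  Let `D` be a hereditary subalgebra of a
C*-algebra `B` and `(e_t)` a net in `B` with `e_t* e_t ≤ Re e_t` (i.e. `e_t ∈ ½𝔉_B`),
whose real parts `Re e_t = (e_t + e_t*)/2` lie in `D`, increase with `t`, and satisfy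
`d* (Re e_t) d → d* d` weakly for every `d ∈ D`.  Then `(e_t)` acts as a contractive
approximate identity for `D`. -/
theorem stmt_7 {B : Type*} [NonUnitalCStarAlgebra B] [PartialOrder B] [StarOrderedRing B]
    (D : NonUnitalStarSubalgebra ℂ B) (hD : IsHereditarySubalgebra D)
    {Λ : Type*} [Preorder Λ] [IsDirected Λ (· ≤ ·)] [Nonempty Λ]
    (e : Λ → B)
    (hF : ∀ t, star (e t) * e t ≤ (2 : ℂ)⁻¹ • (e t + star (e t)))
    (hreD : ∀ t, (2 : ℂ)⁻¹ • (e t + star (e t)) ∈ D)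
    (hmono : ∀ s t : Λ, s ≤ t →
      (2 : ℂ)⁻¹ • (e s + star (e s)) ≤ (2 : ℂ)⁻¹ • (e t + star (e t)))
    (hweak : ∀ d ∈ D, ∀ φ : B →L[ℂ] ℂ,
      Tendsto (fun t => φ (star d * ((2 : ℂ)⁻¹ • (e t + star (e t))) * d)) atTop
        (𝓝 (φ (star d * d)))) :
    (∀ t, ‖e t‖ ≤ 1) ∧
    (∀ d ∈ D, Tendsto (fun t => ‖e t * d - d‖) atTop (𝓝 0)) ∧
    (∀ d ∈ D, Tendsto (fun t => ‖d * e t - d‖) atTop (𝓝 0)) :=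
  stmt_7_general D e hF hmono hweak
end

section
/- Let B be a C*-algebra and let D be a hereditary subalgebra of B with associated left ideal L. Let (e_t)_{t∈Λ} be a net in B such that for every t one has e_t* e_t ≤ Re(e_t) := (e_t + e_t*)/2, the real parts satisfy Re(e_t) ∈ D and Re(e_s) ≤ Re(e_t) whenever s ≤ t, and (Re(e_t)) is a contractive approximate identity for D. If x ∈ B lies in the norm closure of L + L*, then ‖(1 − e_t) x (1 − e_t)‖ → 0, where (1 − e_t) x (1 − e_t) denotes x − e_t x − x e_t + e_t x e_t. -/
open scoped Pointwise
open Filter Topology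

open scoped ComplexStarModule

/-! The condition `e* e ≤ ℜ e` says that `1 - 2e` is a contraction in the unitization. Since
`‖1 - 2e*‖ = ‖1 - 2e‖`, also `e e* ≤ ℜ e`, which gives `‖e‖ ≤ 1` and
`‖d - d e‖² ≤ ‖d - d ℜe‖ ‖d‖`. Hence `(1 - eₜ) b d (1 - eₜ) = (b - eₜ b)(d - d eₜ) → 0` for
`d ∈ D`. The maps `x ↦ (1 - eₜ) x (1 - eₜ)` are uniformly bounded, so the set where they tend
to zero is a closed subspace; it thus contains `L`, and applying this to the net `eₜ*`, which
satisfies the same hypotheses, it contains `L*` as well. -/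

section RealPart
variable {A : Type*} [AddCommGroup A] [Module ℂ A] [StarAddMonoid A] [StarModule ℂ A]

lemma two_inv_smul_add_star (a : A) : (2 : ℂ)⁻¹ • (a + star a) = ℜ a := by
  rw [realPart_apply_coe, ← Complex.coe_smul]; norm_num

lemma realPart_star_s9 (a : A) : ℜ (star a) = ℜ a :=
  Subtype.ext <| by simp only [realPart_apply_coe, star_star, add_comm]

lemma coe_realPart_add_self (a : A) : (ℜ a : A) + ℜ a = a + star a := by
  rw [← two_smul ℝ, realPart_apply_coe, smul_smul]; norm_num

end RealPart

section TendstoZero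
variable {ι R E F : Type*}

def tendstoZeroSubmodule [Semiring R] [AddCommMonoid E] [Module R E] [TopologicalSpace F]
    [AddCommMonoid F] [Module R F] [ContinuousAdd F] [ContinuousConstSMul R F]
    (T : ι → E →ₗ[R] F) (l : Filter ι) : Submodule R E where
  carrier := {x | Tendsto (fun i => T i x) l (𝓝 0)}
  zero_mem' := by simpa using tendsto_const_nhds
  add_mem' hx hy := by simpa using hx.add hy
  smul_mem' c x hx := by simpa using hx.const_smul c

@[simp]
lemma mem_tendstoZeroSubmodule [Semiring R] [AddCommMonoid E] [Module R E] [TopologicalSpace F]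
    [AddCommMonoid F] [Module R F] [ContinuousAdd F] [ContinuousConstSMul R F]
    {T : ι → E →ₗ[R] F} {l : Filter ι} {x : E} :
    x ∈ tendstoZeroSubmodule T l ↔ Tendsto (fun i => T i x) l (𝓝 0) :=
  Iff.rfl

lemma isClosed_tendstoZeroSubmodule [Semiring R] [SeminormedAddCommGroup E] [Module R E]
    [SeminormedAddCommGroup F] [Module R F] [ContinuousConstSMul R F]
    (T : ι → E →ₗ[R] F) (l : Filter ι) (C : ℝ) (hT : ∀ i x, ‖T i x‖ ≤ C * ‖x‖) :
    IsClosed (tendstoZeroSubmodule T l : Set E) :=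
  (LipschitzWith.uniformEquicontinuous (fun i => T i) _
    fun i => AddMonoidHomClass.lipschitz_of_bound (T i) C (hT i)).equicontinuous
    |>.isClosed_setOfPred_tendsto continuous_const

end TendstoZero

section Sandwich
variable (R : Type*) {B : Type*} [Semiring R] [NonUnitalRing B] [Module R B]
  [IsScalarTower R B B] [SMulCommClass R B B]

def sandwichCompl (e : B) : B →ₗ[R] B where
  toFun x := x - e * x - x * e + e * x * e
  map_add' x y := by noncomm_ring
  map_smul' c x := by
    simp only [smul_sub, smul_add, mul_smul_comm, smul_mul_assoc, RingHom.id_apply]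

variable {R}

lemma sandwichCompl_apply (e x : B) : sandwichCompl R e x = x - e * x - x * e + e * x * e := rfl

lemma sandwichCompl_mul (e b d : B) : sandwichCompl R e (b * d) = (b - e * b) * (d - d * e) := by
  rw [sandwichCompl_apply]; noncomm_ring

lemma sandwichCompl_star [StarRing B] (e x : B) :
    sandwichCompl R e (star x) = star (sandwichCompl R (star e) x) := by
  simp only [sandwichCompl_apply, star_add, star_sub, star_mul, star_star]; noncomm_ring

end Sandwich

section SandwichNorm
variable {R B : Type*} [Semiring R] [NonUnitalSeminormedRing B] [Module R B]
  [IsScalarTower R B B] [SMulCommClass R B B]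

lemma norm_sandwichCompl_le (e x : B) :
    ‖sandwichCompl R e x‖ ≤ (1 + ‖e‖) ^ 2 * ‖x‖ := by
  have hx : ‖x - e * x‖ ≤ (1 + ‖e‖) * ‖x‖ := by
    have := norm_sub_le x (e * x); have := norm_mul_le e x; nlinarith
  have hy : ∀ y : B, ‖y - y * e‖ ≤ (1 + ‖e‖) * ‖y‖ := fun y => by
    have := norm_sub_le y (y * e); have := norm_mul_le y e; nlinarith
  calc ‖sandwichCompl R e x‖ = ‖(x - e * x) - (x - e * x) * e‖ := by
        rw [sandwichCompl_apply]; congr 1; noncomm_ring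
    _ ≤ (1 + ‖e‖) * ((1 + ‖e‖) * ‖x‖) := (hy _).trans (by gcongr)
    _ = (1 + ‖e‖) ^ 2 * ‖x‖ := by ring

lemma isClosed_tendstoZeroSubmodule_sandwichCompl {ι : Type*} [ContinuousConstSMul R B]
    {e : ι → B} (he : ∀ i, ‖e i‖ ≤ 1) (l : Filter ι) :
    IsClosed (tendstoZeroSubmodule (fun i => sandwichCompl R (e i)) l : Set B) :=
  isClosed_tendstoZeroSubmodule _ l 4 fun i x => (norm_sandwichCompl_le _ _).trans <| by
    gcongr; nlinarith [norm_nonneg (e i), he i]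

end SandwichNorm

section Unital
variable {A : Type*} [CStarAlgebra A] [PartialOrder A] [StarOrderedRing A]

lemma star_mul_self_le_one_iff (x : A) : star x * x ≤ 1 ↔ ‖x‖ ≤ 1 := by
  rw [← CStarAlgebra.norm_le_one_iff_of_nonneg _ (star_mul_self_nonneg x),
    CStarRing.norm_star_mul_self, ← abs_le_one_iff_mul_self_le_one, abs_norm]

lemma star_mul_self_le_realPart_iff (a : A) :
    star a * a ≤ ℜ a ↔ ‖1 - (2 : ℝ) • a‖ ≤ 1 := by
  have h : star (1 - (2 : ℝ) • a) * (1 - (2 : ℝ) • a) = 1 - (4 : ℝ) • (ℜ a - star a * a) := by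
    simp only [realPart_apply_coe, star_sub, star_one, star_smul, star_trivial, sub_mul, mul_sub,
      one_mul, mul_one, smul_mul_assoc, mul_smul_comm, smul_smul, smul_sub, smul_add]
    module
  rw [← star_mul_self_le_one_iff, h, sub_le_self_iff,
    smul_nonneg_iff_nonneg_of_pos_left (by norm_num), sub_nonneg]

end Unital

lemma Unitization.inr_realPart {B : Type*} [NonUnitalCStarAlgebra B] (a : B) :
    ((ℜ a : B) : Unitization ℂ B) = ℜ (a : Unitization ℂ B) := by
  simp [realPart_apply_coe, Unitization.inr_add, Unitization.inr_smul, Unitization.inr_star]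

section NonUnital
variable {B : Type*} [NonUnitalCStarAlgebra B] [PartialOrder B] [StarOrderedRing B]

lemma mul_star_self_le_realPart {a : B} (h : star a * a ≤ ℜ a) : a * star a ≤ ℜ a := by
  rw [← Unitization.inr_le_iff _ _ (IsSelfAdjoint.star_mul_self a) (ℜ a).2, Unitization.inr_mul,
    Unitization.inr_star, Unitization.inr_realPart, star_mul_self_le_realPart_iff] at h
  rw [← Unitization.inr_le_iff _ _ (IsSelfAdjoint.mul_star_self a) (ℜ a).2, Unitization.inr_mul,
    Unitization.inr_star, Unitization.inr_realPart]
  have h' : ‖1 - (2 : ℝ) • star (a : Unitization ℂ B)‖ ≤ 1 := by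
    rwa [← norm_star, star_sub, star_one, star_smul, star_trivial, star_star]
  simpa [realPart_star_s9] using (star_mul_self_le_realPart_iff _).mpr h'

lemma norm_le_one_of_mul_star_self_le_realPart {a : B} (h : a * star a ≤ ℜ a) : ‖a‖ ≤ 1 := by
  have : ‖a‖ * ‖a‖ ≤ ‖a‖ := calc
    ‖a‖ * ‖a‖ = ‖a * star a‖ := CStarRing.norm_self_mul_star.symm
    _ ≤ ‖(ℜ a : B)‖ := CStarAlgebra.norm_le_norm_of_nonneg_of_le (mul_star_self_nonneg a) h
    _ ≤ ‖a‖ := realPart.norm_le a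
  nlinarith [norm_nonneg a]

lemma norm_sub_mul_sq_le {a : B} (h : a * star a ≤ ℜ a) (d : B) :
    ‖d - d * a‖ ^ 2 ≤ ‖d - d * ℜ a‖ * ‖d‖ := by
  set r : B := (ℜ a : B) with hr
  have hid : (d - d * a) * star (d - d * a)
      = (d - d * r) * star d - d * (r - a * star a) * star d := by
    have : (d - d * a) * star (d - d * a) - ((d - d * r) * star d - d * (r - a * star a) * star d)
        = d * ((r + r) - (a + star a)) * star d := by
      simp only [star_sub, star_mul]; noncomm_ring
    rwa [hr, coe_realPart_add_self, sub_self, mul_zero, zero_mul, sub_eq_zero] at this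
  have hle : (d - d * a) * star (d - d * a) ≤ (d - d * r) * star d := by
    rw [hid]; exact sub_le_self _ (star_right_conjugate_nonneg (sub_nonneg.mpr h) d)
  calc ‖d - d * a‖ ^ 2 = ‖(d - d * a) * star (d - d * a)‖ := by
        rw [sq, CStarRing.norm_self_mul_star]
    _ ≤ ‖(d - d * r) * star d‖ :=
        CStarAlgebra.norm_le_norm_of_nonneg_of_le (mul_star_self_nonneg _) hle
    _ ≤ ‖d - d * r‖ * ‖d‖ := (norm_mul_le _ _).trans_eq (by rw [norm_star])

variable {ι : Type*} {l : Filter ι} {e : ι → B}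

lemma tendsto_norm_sub_mul (he : ∀ i, e i * star (e i) ≤ ℜ (e i)) {d : B}
    (hd : Tendsto (fun i => ‖d * ℜ (e i) - d‖) l (𝓝 0)) :
    Tendsto (fun i => ‖d - d * e i‖) l (𝓝 0) := by
  have hsq : Tendsto (fun i => ‖d - d * e i‖ ^ 2) l (𝓝 0) := by
    refine squeeze_zero (fun i => by positivity) (fun i => norm_sub_mul_sq_le (he i) d) ?_
    simpa [norm_sub_rev] using hd.mul_const ‖d‖
  simpa using hsq.sqrt

lemma leftIdealOf_subset_tendstoZeroSubmodule (D : NonUnitalStarSubalgebra ℂ B)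
    (he : ∀ i, e i * star (e i) ≤ ℜ (e i))
    (hcai : ∀ d ∈ D, Tendsto (fun i => ‖d * ℜ (e i) - d‖) l (𝓝 0)) :
    leftIdealOf D ⊆ tendstoZeroSubmodule (fun i => sandwichCompl ℂ (e i)) l := by
  have hnorm i := norm_le_one_of_mul_star_self_le_realPart (he i)
  refine closure_minimal (Submodule.span_le.mpr ?_)
    (isClosed_tendstoZeroSubmodule_sandwichCompl hnorm l)
  rintro _ ⟨b, d, hd, rfl⟩
  rw [SetLike.mem_coe, mem_tendstoZeroSubmodule]
  refine tendsto_zero_iff_norm_tendsto_zero.mpr <| squeeze_zero (fun i => norm_nonneg _)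
    (fun i => ?_) (by simpa using (tendsto_norm_sub_mul he (hcai d hd)).const_mul (2 * ‖b‖))
  have hb : ‖b - e i * b‖ ≤ 2 * ‖b‖ := by
    have := norm_sub_le b (e i * b); have := norm_mul_le (e i) b
    nlinarith [hnorm i, norm_nonneg b]
  rw [sandwichCompl_mul]
  exact (norm_mul_le _ _).trans (by gcongr)

end NonUnital

theorem stmt_9_general {B : Type*} [NonUnitalCStarAlgebra B] [PartialOrder B] [StarOrderedRing B]
    (D : NonUnitalStarSubalgebra ℂ B)
    {Λ : Type*} [Preorder Λ]
    (e : Λ → B)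
    (hF : ∀ t, star (e t) * e t ≤ (2 : ℂ)⁻¹ • (e t + star (e t)))
    (hcai₂ : ∀ d ∈ D,
      Tendsto (fun t => ‖d * ((2 : ℂ)⁻¹ • (e t + star (e t))) - d‖) atTop (𝓝 0))
    (x : B) (hx : x ∈ closure (leftIdealOf D + star '' leftIdealOf D)) :
    Tendsto (fun t => ‖x - e t * x - x * e t + e t * x * e t‖) atTop (𝓝 0) := by
  simp only [two_inv_smul_add_star] at hF hcai₂
  have he t : e t * star (e t) ≤ ℜ (e t) := mul_star_self_le_realPart (hF t)
  set S := tendstoZeroSubmodule (fun t => sandwichCompl ℂ (e t)) atTop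
  have hL : leftIdealOf D ⊆ S := leftIdealOf_subset_tendstoZeroSubmodule D he hcai₂
  have hLstar : star '' leftIdealOf D ⊆ S := by
    rintro _ ⟨y, hy, rfl⟩
    have hy' := leftIdealOf_subset_tendstoZeroSubmodule (e := star ∘ e) D
      (by simpa [realPart_star_s9] using hF) (by simpa [realPart_star_s9] using hcai₂) hy
    simpa [S, sandwichCompl_star] using hy'.star
  have hS : closure (leftIdealOf D + star '' leftIdealOf D) ⊆ S := by
    refine closure_minimal ?_ (isClosed_tendstoZeroSubmodule_sandwichCompl
      (fun t => norm_le_one_of_mul_star_self_le_realPart (he t)) atTop)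
    rintro _ ⟨a, ha, b, hb, rfl⟩
    exact S.add_mem (hL ha) (hLstar hb)
  exact tendsto_zero_iff_norm_tendsto_zero.mp (mem_tendstoZeroSubmodule.mp (hS hx))

/-- Corollary 5.4 of the paper.  Let `D` be a hereditary subalgebra of
a C*-algebra `B` with associated left ideal `L`, and `(e_t)` a net in `B` with
`e_t* e_t ≤ Re e_t`, whose real parts `Re e_t = (e_t + e_t*)/2` lie in `D`, increase
with `t`, and form a contractive approximate identity for `D`.  If `x` lies in the norm
closure of `L + L*`, then `‖(1 − e_t) x (1 − e_t)‖ → 0`. -/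
theorem stmt_9 {B : Type*} [NonUnitalCStarAlgebra B] [PartialOrder B] [StarOrderedRing B]
    (D : NonUnitalStarSubalgebra ℂ B) (hD : IsHereditarySubalgebra D)
    {Λ : Type*} [Preorder Λ] [IsDirected Λ (· ≤ ·)] [Nonempty Λ]
    (e : Λ → B)
    (hF : ∀ t, star (e t) * e t ≤ (2 : ℂ)⁻¹ • (e t + star (e t)))
    (hreD : ∀ t, (2 : ℂ)⁻¹ • (e t + star (e t)) ∈ D)
    (hmono : ∀ s t : Λ, s ≤ t →
      (2 : ℂ)⁻¹ • (e s + star (e s)) ≤ (2 : ℂ)⁻¹ • (e t + star (e t)))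
    (hre1 : ∀ t, ‖(2 : ℂ)⁻¹ • (e t + star (e t))‖ ≤ 1)
    (hcai₁ : ∀ d ∈ D,
      Tendsto (fun t => ‖((2 : ℂ)⁻¹ • (e t + star (e t))) * d - d‖) atTop (𝓝 0))
    (hcai₂ : ∀ d ∈ D,
      Tendsto (fun t => ‖d * ((2 : ℂ)⁻¹ • (e t + star (e t))) - d‖) atTop (𝓝 0))
    (x : B) (hx : x ∈ closure (leftIdealOf D + star '' leftIdealOf D)) :
    Tendsto (fun t => ‖x - e t * x - x * e t + e t * x * e t‖) atTop (𝓝 0) :=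
  stmt_9_general D e hF hcai₂ x hx
end

section
/- Let B be a C*-algebra, let D be a hereditary subalgebra of B with associated left ideal L, and let (f_t)_{t∈Λ} be an increasing contractive approximate identity for D (a net in D with 0 ≤ f_t, ‖f_t‖ ≤ 1, f_s ≤ f_t for s ≤ t, and f_t d → d, d f_t → d in norm for every d ∈ D). Let I be the norm closure of L + L*. Then for every x ∈ B, the net ‖(1 − f_t) x (1 − f_t)‖ converges to infDist(x, I), the distance from x to I; here (1 − f_t) x (1 − f_t) denotes x − f_t x − x f_t + f_t x f_t. -/
open scoped Pointwise
open Filter Topology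

section Aux

set_option linter.unusedSectionVars false

variable {B : Type*} [NonUnitalCStarAlgebra B] [PartialOrder B] [StarOrderedRing B]

/-- The compression `z ↦ (1-g) z (1-g)` computed inside `B`. -/
noncomputable def compT (g z : B) : B := z - g * z - z * g + g * z * g

lemma compT_norm_le {g : B} (hg0 : 0 ≤ g) (hg1 : ‖g‖ ≤ 1) (z : B) :
    ‖compT g z‖ ≤ ‖z‖ := by
  have h : ((g : Unitization ℂ B)) ∈ Set.Icc 0 1 :=
    CStarAlgebra.inr_mem_Icc_iff_norm_le.mpr ⟨hg0, hg1⟩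
  set u : Unitization ℂ B := 1 - (g : Unitization ℂ B) with hu
  have hu0 : 0 ≤ u := sub_nonneg.mpr h.2
  have hu1 : u ≤ 1 := by
    have := h.1
    simp only [hu, sub_le_self_iff]
    exact this
  have hun : ‖u‖ ≤ 1 := (CStarAlgebra.norm_le_one_iff_of_nonneg u hu0).mpr hu1
  have key : ((compT g z : B) : Unitization ℂ B) = u * (z : Unitization ℂ B) * u := by
    simp only [compT, Unitization.inr_add, Unitization.inr_sub, Unitization.inr_mul, hu]
    noncomm_ring
  calc ‖compT g z‖ = ‖((compT g z : B) : Unitization ℂ B)‖ := (Unitization.norm_inr _).symm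
    _ ≤ ‖u‖ * ‖(z : Unitization ℂ B)‖ * ‖u‖ := key ▸ (norm_mul_le _ _).trans
        (by gcongr; exact norm_mul_le _ _)
    _ ≤ 1 * ‖(z : Unitization ℂ B)‖ * 1 := by gcongr
    _ = ‖z‖ := by rw [one_mul, mul_one, Unitization.norm_inr]

lemma compT_sub (g y z : B) : compT g (y - z) = compT g y - compT g z := by
  simp only [compT]; noncomm_ring

lemma compT_add (g y z : B) : compT g (y + z) = compT g y + compT g z := by
  simp only [compT]; noncomm_ring

lemma compT_zero (g : B) : compT g 0 = 0 := by
  simp [compT]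

lemma compT_smul (g : B) (c : ℂ) (z : B) : compT g (c • z) = c • compT g z := by
  simp only [compT, mul_smul_comm, smul_mul_assoc, smul_sub, smul_add]

lemma compT_star {g : B} (hg : star g = g) (z : B) :
    compT g (star z) = star (compT g z) := by
  simp only [compT, star_add, star_sub, star_mul, hg, mul_assoc]
  abel

lemma compT_mul (g b d : B) : compT g (b * d) = (b - g * b) * (d - d * g) := by
  simp only [compT]; noncomm_ring

end Aux

/-- Corollary 5.5(1) of the paper.  Let `D` be a hereditary subalgebra
of a C*-algebra `B` with associated left ideal `L`, let `(f_t)` be an increasing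
contractive approximate identity for `D`, and let `I` be the norm closure of `L + L*`.
Then for every `x ∈ B`, `‖(1 − f_t) x (1 − f_t)‖ → infDist(x, I)`. -/
theorem stmt_10 {B : Type*} [NonUnitalCStarAlgebra B] [PartialOrder B] [StarOrderedRing B]
    (D : NonUnitalStarSubalgebra ℂ B) (hD : IsHereditarySubalgebra D)
    {Λ : Type*} [Preorder Λ] [IsDirected Λ (· ≤ ·)] [Nonempty Λ]
    (f : Λ → B) (hfD : ∀ t, f t ∈ D) (hf0 : ∀ t, 0 ≤ f t) (hf1 : ∀ t, ‖f t‖ ≤ 1)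
    (hmono : ∀ s t : Λ, s ≤ t → f s ≤ f t)
    (hcai₁ : ∀ d ∈ D, Tendsto (fun t => ‖f t * d - d‖) atTop (𝓝 0))
    (hcai₂ : ∀ d ∈ D, Tendsto (fun t => ‖d * f t - d‖) atTop (𝓝 0))
    (x : B) :
    Tendsto (fun t => ‖x - f t * x - x * f t + f t * x * f t‖) atTop
      (𝓝 (Metric.infDist x (closure (leftIdealOf D + star '' leftIdealOf D)))) := by
  classical
  set L : Set B := leftIdealOf D with hL
  set I : Set B := closure (L + star '' L) with hI
  set P : B → Prop := fun y => Tendsto (fun t => ‖compT (f t) y‖) atTop (𝓝 0) with hP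
  have hbound : ∀ t (z : B), ‖compT (f t) z‖ ≤ ‖z‖ := fun t z =>
    compT_norm_le (hf0 t) (hf1 t) z
  -- the predicate P holds on the generators
  have hPgen : ∀ y ∈ {x : B | ∃ b : B, ∃ d ∈ D, x = b * d}, P y := by
    rintro y ⟨b, d, hd, rfl⟩
    have h1 : Tendsto (fun t => (‖b‖ + ‖b‖) * ‖d * f t - d‖) atTop (𝓝 0) := by
      simpa using (hcai₂ d hd).const_mul (‖b‖ + ‖b‖)
    refine squeeze_zero (fun t => norm_nonneg _) (fun t => ?_) h1
    rw [compT_mul]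
    calc ‖(b - f t * b) * (d - d * f t)‖ ≤ ‖b - f t * b‖ * ‖d - d * f t‖ := norm_mul_le _ _
      _ ≤ (‖b‖ + ‖b‖) * ‖d * f t - d‖ := by
          rw [norm_sub_rev (d * f t) d]
          gcongr
          calc ‖b - f t * b‖ ≤ ‖b‖ + ‖f t * b‖ := norm_sub_le _ _
            _ ≤ ‖b‖ + ‖f t‖ * ‖b‖ := by gcongr; exact norm_mul_le _ _
            _ ≤ ‖b‖ + 1 * ‖b‖ := by gcongr; exact hf1 t
            _ = ‖b‖ + ‖b‖ := by rw [one_mul]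
  -- P is stable under the span operations
  have hPadd : ∀ y z, P y → P z → P (y + z) := by
    intro y z hy hz
    have := hy.add hz
    rw [add_zero] at this
    refine squeeze_zero (fun t => norm_nonneg _) (fun t => ?_) this
    rw [compT_add]
    exact norm_add_le _ _
  have hPspan : ∀ y ∈ (Submodule.span ℂ {x : B | ∃ b : B, ∃ d ∈ D, x = b * d} :
      Submodule ℂ B), P y := by
    intro y hy
    induction hy using Submodule.span_induction with
    | mem z hz => exact hPgen z hz
    | zero => simpa [hP, compT_zero] using tendsto_const_nhds
    | add y z _ _ hy hz => exact hPadd y z hy hz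
    | smul c y _ hy =>
        have := hy.const_mul ‖c‖
        rw [mul_zero] at this
        refine squeeze_zero (fun t => norm_nonneg _) (fun t => ?_) this
        rw [compT_smul, norm_smul]
  -- P is stable under closure
  have hPclosure : ∀ (S : Set B), (∀ y ∈ S, P y) → ∀ y ∈ closure S, P y := by
    intro S hS y hy
    simp only [hP]
    rw [Metric.tendsto_nhds]
    intro ε hε
    obtain ⟨z, hzS, hz⟩ := Metric.mem_closure_iff.mp hy (ε / 2) (by linarith)
    have hzP := hS z hzS
    simp only [hP] at hzP
    rw [Metric.tendsto_nhds] at hzP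
    filter_upwards [hzP (ε / 2) (by linarith)] with t ht
    rw [Real.dist_eq, abs_sub_lt_iff] at *
    constructor
    · calc ‖compT (f t) y‖ - 0 ≤ ‖compT (f t) (y - z)‖ + ‖compT (f t) z‖ - 0 := by
            have : compT (f t) y = compT (f t) (y - z) + compT (f t) z := by
              rw [compT_sub]; abel
            rw [this]
            simpa using norm_add_le _ _
        _ ≤ ‖y - z‖ + ‖compT (f t) z‖ := by
            have := hbound t (y - z); simpa using this
        _ < ε / 2 + ε / 2 := by
            have h2 : ‖compT (f t) z‖ < ε / 2 := by
              have := ht.1; simpa using this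
            have h3 : ‖y - z‖ < ε / 2 := by rwa [← dist_eq_norm]
            linarith
        _ = ε := by ring
    · have := norm_nonneg (compT (f t) y); linarith
  -- P holds on L
  have hPL : ∀ y ∈ L, P y := by
    rw [hL, leftIdealOf]
    exact hPclosure _ hPspan
  -- P holds on star '' L
  have hPLstar : ∀ y ∈ star '' L, P y := by
    rintro y ⟨w, hw, rfl⟩
    have hw' := hPL w hw
    have hsa : ∀ t, star (f t) = f t := fun t => (IsSelfAdjoint.of_nonneg (hf0 t)).star_eq
    refine squeeze_zero (fun t => norm_nonneg _) (fun t => ?_) hw'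
    rw [compT_star (hsa t), norm_star]
  -- P holds on I
  have hPI : ∀ y ∈ I, P y := by
    refine hPclosure _ ?_
    rintro y ⟨y₁, hy₁, y₂, hy₂, rfl⟩
    exact hPadd y₁ y₂ (hPL y₁ hy₁) (hPLstar y₂ hy₂)
  -- I is nonempty
  have hspan0 : (0 : B) ∈ (Submodule.span ℂ {x : B | ∃ b : B, ∃ d ∈ D, x = b * d} :
      Submodule ℂ B) := Submodule.zero_mem _
  have h0L : (0 : B) ∈ L := subset_closure hspan0
  have hInonempty : I.Nonempty := ⟨0, subset_closure ⟨0, h0L, 0, ⟨0, h0L, star_zero B⟩,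
    (add_zero 0)⟩⟩
  -- the lower bound : infDist x I ≤ ‖compT (f t) x‖ for all t
  have hlow : ∀ t, Metric.infDist x I ≤ ‖compT (f t) x‖ := by
    intro t
    have hmem1 : x * f t - f t * x * f t ∈ L := by
      apply subset_closure
      exact Submodule.sub_mem _
        (Submodule.subset_span ⟨x, f t, hfD t, rfl⟩)
        (Submodule.subset_span ⟨f t * x, f t, hfD t, rfl⟩)
    have hmem2 : f t * x ∈ star '' L := by
      refine ⟨star x * f t, subset_closure (Submodule.subset_span ⟨star x, f t, hfD t, rfl⟩), ?_⟩
      simp [star_mul, (IsSelfAdjoint.of_nonneg (hf0 t)).star_eq]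
    have hmemI : (x * f t - f t * x * f t) + f t * x ∈ I :=
      subset_closure ⟨_, hmem1, _, hmem2, rfl⟩
    have heq : dist x ((x * f t - f t * x * f t) + f t * x) = ‖compT (f t) x‖ := by
      rw [dist_eq_norm]
      congr 1
      simp only [compT]
      abel
    calc Metric.infDist x I ≤ dist x ((x * f t - f t * x * f t) + f t * x) :=
          Metric.infDist_le_dist_of_mem hmemI
      _ = ‖compT (f t) x‖ := heq
  -- conclude
  have hgoal : Tendsto (fun t => ‖compT (f t) x‖) atTop (𝓝 (Metric.infDist x I)) := by
    rw [Metric.tendsto_nhds]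
    intro ε hε
    have hlt : Metric.infDist x I < Metric.infDist x I + ε / 2 := by linarith
    obtain ⟨y, hyI, hy⟩ := (Metric.infDist_lt_iff hInonempty).mp hlt
    have hyP := hPI y hyI
    simp only [hP] at hyP
    rw [Metric.tendsto_nhds] at hyP
    filter_upwards [hyP (ε / 2) (by linarith)] with t ht
    rw [Real.dist_eq, abs_sub_lt_iff]
    have h2 : ‖compT (f t) y‖ < ε / 2 := by
      have := ht; rw [Real.dist_eq, abs_sub_lt_iff] at this
      have := this.1; linarith [this]
    constructor
    · have hupper : ‖compT (f t) x‖ ≤ ‖x - y‖ + ‖compT (f t) y‖ := by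
        have : compT (f t) x = compT (f t) (x - y) + compT (f t) y := by
          rw [compT_sub]; abel
        rw [this]
        exact (norm_add_le _ _).trans (by gcongr; exact hbound t (x - y))
      have hxy : ‖x - y‖ < Metric.infDist x I + ε / 2 := by rwa [← dist_eq_norm]
      linarith
    · have := hlow t; linarith
  exact hgoal
end
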